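/- Let d ≥ 1, K_b > 0, δ₁ > 0, set M = 2(2K_b+1)² + (2K_b+1) and ε = δ₁/(M + 1/2). Let B₁, B₂ be d×d real matrices with operator norms ‖B₁‖ ≤ K_b and ‖B₂‖ ≤ K_b, and let S be a symmetric d×d matrix with ⟨S y, y⟩ ≥ δ₁ |y|² for all y ∈ ℝ^d. Let α ∈ [0,1) and α' ∈ (0, 1/3]. Then for all x, y ∈ ℝ^d: ε(3α' − 2)α² |x|² + ε ⟨ (2α³ B₁ − 2α² B₂) y − 2αα' y , x ⟩ + 2εα(1−α') ⟨x, y⟩ − ⟨S y, y⟩ + εα' |y|² − εα² ⟨B₁ y, y⟩ + εα ⟨B₂ y, y⟩ ≤ −(εα²/2) |x|² + (εM − δ₁) |y|². In particular the right-hand side coefficient of |y|² is negative: εM − δ₁ = −δ₁ / (2M + 1) < 0. -/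
import Mathlib

set_option maxHeartbeats 1000000


open scoped RealInnerProductSpace

private lemma quad_bound (K δ ε α α' a b p q r u v s : ℝ)
    (hK : 0 < K) (hδ : 0 < δ) (hε : 0 < ε) (hα₀ : 0 ≤ α) (hα₁ : α < 1)
    (hα'₀ : 0 < α') (hα'₁ : α' ≤ 1 / 3) (ha : 0 ≤ a) (hb : 0 ≤ b)
    (hp : |p| ≤ K * (a * b)) (hq : |q| ≤ K * (a * b)) (hr : |r| ≤ a * b)
    (hu : |u| ≤ K * (b * b)) (hv : |v| ≤ K * (b * b)) (hs : δ * b ^ 2 ≤ s) :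
    ε * (3 * α' - 2) * α ^ 2 * a ^ 2
      + ε * (2 * α ^ 3 * p - 2 * α ^ 2 * q - 2 * α * α' * r)
      + 2 * ε * α * (1 - α') * r - s + ε * α' * b ^ 2 - ε * α ^ 2 * u + ε * α * v
    ≤ -(ε * α ^ 2 / 2) * a ^ 2 + (ε * (2 * (2 * K + 1) ^ 2 + (2 * K + 1)) - δ) * b ^ 2 := by
  obtain ⟨hp1, hp2⟩ := abs_le.1 hp
  obtain ⟨hq1, hq2⟩ := abs_le.1 hq
  obtain ⟨hr1, hr2⟩ := abs_le.1 hr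
  obtain ⟨hu1, hu2⟩ := abs_le.1 hu
  obtain ⟨hv1, hv2⟩ := abs_le.1 hv
  have hab : 0 ≤ a * b := mul_nonneg ha hb
  have hbb : 0 ≤ b * b := mul_nonneg hb hb
  have hα2 : α ^ 2 ≤ α := by nlinarith
  have hα3 : α ^ 3 ≤ α := by nlinarith
  -- x² term
  have c1 : ε * (3 * α' - 2) * α ^ 2 * a ^ 2 ≤ -(ε * α ^ 2 * a ^ 2) := by
    linarith [mul_nonneg (mul_nonneg (mul_nonneg hε.le (sq_nonneg α)) (sq_nonneg a))
      (by linarith : (0:ℝ) ≤ 1 - 3 * α')]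
  -- cross terms
  have c2 : ε * (2 * α ^ 3 * p) ≤ ε * (2 * α * (K * (a * b))) := by
    have h1 : α ^ 3 * (K * (a * b) - p) ≥ 0 :=
      mul_nonneg (pow_nonneg hα₀ 3) (by linarith)
    have h2 : (α - α ^ 3) * (K * (a * b)) ≥ 0 :=
      mul_nonneg (by linarith) (mul_nonneg hK.le hab)
    linarith [mul_nonneg hε.le (by linarith : (0:ℝ) ≤ 2 * α * (K * (a * b)) - 2 * α ^ 3 * p)]
  have c3 : ε * (-(2 * α ^ 2 * q)) ≤ ε * (2 * α * (K * (a * b))) := by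
    have h1 : α ^ 2 * (K * (a * b) + q) ≥ 0 := mul_nonneg (sq_nonneg α) (by linarith)
    have h2 : (α - α ^ 2) * (K * (a * b)) ≥ 0 :=
      mul_nonneg (by linarith) (mul_nonneg hK.le hab)
    linarith [mul_nonneg hε.le (by linarith : (0:ℝ) ≤ 2 * α * (K * (a * b)) + 2 * α ^ 2 * q)]
  have c4 : ε * (2 * α * (1 - 2 * α') * r) ≤ ε * (2 * α * (a * b)) := by
    have h1 : (α * (1 - 2 * α')) * (a * b - r) ≥ 0 :=
      mul_nonneg (mul_nonneg hα₀ (by linarith)) (by linarith)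
    have h2 : (α * (2 * α')) * (a * b) ≥ 0 :=
      mul_nonneg (mul_nonneg hα₀ (by linarith)) hab
    nlinarith [mul_nonneg hε.le
      (by nlinarith : (0:ℝ) ≤ 2 * α * (a * b) - 2 * α * (1 - 2 * α') * r)]
  -- Young's inequality
  have c5 : ε * (2 * α * (K * (a * b)) + 2 * α * (K * (a * b)) + 2 * α * (a * b))
      ≤ ε * α ^ 2 / 2 * a ^ 2 + 2 * ε * (2 * K + 1) ^ 2 * b ^ 2 := by
    nlinarith [mul_nonneg hε.le (sq_nonneg (α * a - 2 * (2 * K + 1) * b))]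
  -- y² terms
  have c6 : ε * α' * b ^ 2 ≤ ε * b ^ 2 := by
    linarith [mul_nonneg (mul_nonneg hε.le (sq_nonneg b)) (by linarith : (0:ℝ) ≤ 1 - α')]
  have c7 : -(ε * α ^ 2 * u) ≤ ε * (K * b ^ 2) := by
    have h1 : α ^ 2 * (K * (b * b) + u) ≥ 0 := mul_nonneg (sq_nonneg α) (by linarith)
    have h2 : (1 - α ^ 2) * (K * (b * b)) ≥ 0 :=
      mul_nonneg (by nlinarith) (mul_nonneg hK.le hbb)
    linarith [mul_nonneg hε.le (by linarith : (0:ℝ) ≤ K * (b * b) + α ^ 2 * u)]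
  have c8 : ε * α * v ≤ ε * (K * b ^ 2) := by
    have h1 : α * (K * (b * b) - v) ≥ 0 := mul_nonneg hα₀ (by linarith)
    have h2 : (1 - α) * (K * (b * b)) ≥ 0 :=
      mul_nonneg (by linarith) (mul_nonneg hK.le hbb)
    linarith [mul_nonneg hε.le (by linarith : (0:ℝ) ≤ K * (b * b) - α * v)]
  linarith [c1, c2, c3, c4, c5, c6, c7, c8, hs]

/-- The key hypocoercivity quadratic-form estimate: with
`M = 2(2K_b+1)² + (2K_b+1)` and `ε = δ₁/(M + 1/2)`, for matrices `B₁, B₂` of operator norm at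
most `K_b`, a symmetric matrix `S ≥ δ₁ I`, and parameters `α ∈ [0,1)`, `α' ∈ (0,1/3]`, the
quadratic form `⟨R_t z, z⟩` is bounded by `−(εα²/2)|x|² + (εM − δ₁)|y|²`, and
`εM − δ₁ = −δ₁/(2M+1) < 0`. -/
theorem statement_9 (d : ℕ) (hd : 1 ≤ d) (K_b δ₁ : ℝ) (hKb : 0 < K_b) (hδ₁ : 0 < δ₁)
    (M ε : ℝ) (hM : M = 2 * (2 * K_b + 1) ^ 2 + (2 * K_b + 1)) (hε : ε = δ₁ / (M + 1 / 2))
    (B₁ B₂ S : EuclideanSpace ℝ (Fin d) →L[ℝ] EuclideanSpace ℝ (Fin d))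
    (hB₁ : ‖B₁‖ ≤ K_b) (hB₂ : ‖B₂‖ ≤ K_b)
    (hSsymm : ∀ u v : EuclideanSpace ℝ (Fin d), ⟪S u, v⟫ = ⟪u, S v⟫)
    (hScoer : ∀ v : EuclideanSpace ℝ (Fin d), δ₁ * ‖v‖ ^ 2 ≤ ⟪S v, v⟫)
    (α α' : ℝ) (hα₀ : 0 ≤ α) (hα₁ : α < 1) (hα'₀ : 0 < α') (hα'₁ : α' ≤ 1 / 3) :
    (∀ x y : EuclideanSpace ℝ (Fin d),
      ε * (3 * α' - 2) * α ^ 2 * ‖x‖ ^ 2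
        + ε * ⟪(2 * α ^ 3) • B₁ y - (2 * α ^ 2) • B₂ y - (2 * α * α') • y, x⟫
        + 2 * ε * α * (1 - α') * ⟪x, y⟫
        - ⟪S y, y⟫ + ε * α' * ‖y‖ ^ 2 - ε * α ^ 2 * ⟪B₁ y, y⟫ + ε * α * ⟪B₂ y, y⟫
      ≤ -(ε * α ^ 2 / 2) * ‖x‖ ^ 2 + (ε * M - δ₁) * ‖y‖ ^ 2)
    ∧ ε * M - δ₁ = -δ₁ / (2 * M + 1) ∧ ε * M - δ₁ < 0 := by
  have hMpos : 0 < M := by nlinarith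
  have hden : (0:ℝ) < M + 1 / 2 := by linarith
  have hεpos : 0 < ε := hε ▸ div_pos hδ₁ hden
  refine ⟨?_, ?_, ?_⟩
  · intro x y
    have key : ∀ (B : EuclideanSpace ℝ (Fin d) →L[ℝ] EuclideanSpace ℝ (Fin d)),
        ‖B‖ ≤ K_b → ∀ u w : EuclideanSpace ℝ (Fin d),
        |⟪B u, w⟫| ≤ K_b * (‖u‖ * ‖w‖) := by
      intro B hB u w
      calc |⟪B u, w⟫| ≤ ‖B u‖ * ‖w‖ := abs_real_inner_le_norm _ _
        _ ≤ (K_b * ‖u‖) * ‖w‖ := by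
            apply mul_le_mul_of_nonneg_right _ (norm_nonneg _)
            exact (B.le_opNorm u).trans (mul_le_mul_of_nonneg_right hB (norm_nonneg _))
        _ = K_b * (‖u‖ * ‖w‖) := by ring
    have hexp : ⟪(2 * α ^ 3) • B₁ y - (2 * α ^ 2) • B₂ y - (2 * α * α') • y, x⟫
        = 2 * α ^ 3 * ⟪B₁ y, x⟫ - 2 * α ^ 2 * ⟪B₂ y, x⟫ - 2 * α * α' * ⟪x, y⟫ := by
      rw [inner_sub_left, inner_sub_left, real_inner_smul_left, real_inner_smul_left,
        real_inner_smul_left, real_inner_comm y x]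
    rw [hexp]
    have h := quad_bound K_b δ₁ ε α α' ‖x‖ ‖y‖ ⟪B₁ y, x⟫ ⟪B₂ y, x⟫ ⟪x, y⟫
      ⟪B₁ y, y⟫ ⟪B₂ y, y⟫ ⟪S y, y⟫ hKb hδ₁ hεpos hα₀ hα₁ hα'₀ hα'₁
      (norm_nonneg _) (norm_nonneg _)
      (by have h := key B₁ hB₁ y x; rwa [mul_comm ‖y‖ ‖x‖] at h)
      (by have h := key B₂ hB₂ y x; rwa [mul_comm ‖y‖ ‖x‖] at h)
      (abs_real_inner_le_norm x y)
      (by simpa [sq] using key B₁ hB₁ y y) (by simpa [sq] using key B₂ hB₂ y y)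
      (hScoer y)
    rw [hM]
    linarith
  · rw [hε]; field_simp; ring
  · rw [hε]
    have h2 : δ₁ / (M + 1 / 2) * M - δ₁ = -δ₁ / (2 * M + 1) := by field_simp; ring
    rw [h2]
    exact div_neg_of_neg_of_pos (by linarith) (by linarith)
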